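/- arXiv:1203.2282 — 3 statements merged into one kernel-verified Lean document; each statement's English description precedes it below -/
import Mathlib

section
/- If f is differentiable on (a,b), continuous on [a,b], and |f'| is quasi-convex on [a,b] (i.e. |f'(tx+(1-t)y)| ≤ max(|f'(x)|,|f'(y)|) for all x,y ∈ [a,b], t ∈ [0,1]), then |(f(a)+f(b))/2 − (1/(b-a)) ∫_a^b f(x) dx| ≤ ((b-a)/4) · max(|f'(a)|, |f'(b)|). -/
/-!
Integrating by parts against the kernel `x - (a + b) / 2` turns the trapezoid error into
`(1 / (b - a)) ∫ (x - (a + b) / 2) f' x`. Quasi-convexity bounds `|f'|` on `[a, b]` by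
`max |f' a| |f' b|`, and `∫ |x - (a + b) / 2| = (b - a) ^ 2 / 4`.
-/

open MeasureTheory intervalIntegral Set

theorem exists_mem_Icc_combination_eq {a b x : ℝ} (hab : a ≤ b) (hx : x ∈ Icc a b) :
    ∃ t ∈ Icc (0 : ℝ) 1, t * a + (1 - t) * b = x := by
  rw [← segment_eq_Icc hab] at hx
  obtain ⟨s, t, hs, ht, hst, rfl⟩ := hx
  exact ⟨s, ⟨hs, by linarith⟩, by rw [← hst]; simp⟩

theorem integral_sub_midpoint_mul_deriv {a b : ℝ} (hab : a ≤ b) {f f' : ℝ → ℝ}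
    (hcont : ContinuousOn f (Icc a b)) (hf : ∀ x ∈ Ioo a b, HasDerivAt f (f' x) x)
    (hint : IntervalIntegrable f' volume a b) :
    ∫ x in a..b, (x - (a + b) / 2) * f' x = (b - a) / 2 * (f a + f b) - ∫ x in a..b, f x := by
  have hparts := integral_mul_deriv_eq_deriv_mul_of_hasDerivAt
    (u := fun x ↦ x - (a + b) / 2) (u' := fun _ ↦ 1)
    (continuous_id.sub continuous_const).continuousOn (by rwa [uIcc_of_le hab])
    (fun x _ ↦ (hasDerivAt_id x).sub_const ((a + b) / 2))
    (by rwa [min_eq_left hab, max_eq_right hab]) intervalIntegrable_const hint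
  simp only [one_mul] at hparts
  rw [hparts]
  ring

theorem integral_abs_sub_midpoint {a b : ℝ} (hab : a ≤ b) :
    ∫ x in a..b, |x - (a + b) / 2| = (b - a) ^ 2 / 4 := by
  have hac : a ≤ (a + b) / 2 := by linarith
  have hcb : (a + b) / 2 ≤ b := by linarith
  set c := (a + b) / 2
  have hcont : Continuous fun x ↦ |x - c| := (continuous_id.sub continuous_const).abs
  have left : ∫ x in a..c, |x - c| = (c - a) ^ 2 / 2 := by
    have := integral_pow_abs_sub_uIoc (a := c) (b := a) 1
    rw [uIoc_of_ge hac, ← integral_of_le hac] at this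
    simpa [abs_of_nonpos (sub_nonpos.2 hac), abs_sub_comm, one_add_one_eq_two] using this
  have right : ∫ x in c..b, |x - c| = (b - c) ^ 2 / 2 := by
    have := integral_pow_abs_sub_uIoc (a := c) (b := b) 1
    rw [uIoc_of_le hcb, ← integral_of_le hcb] at this
    simpa [abs_of_nonneg (sub_nonneg.2 hcb), one_add_one_eq_two] using this
  rw [← integral_add_adjacent_intervals (hcont.intervalIntegrable a c)
    (hcont.intervalIntegrable c b), left, right]
  ring

theorem abs_integral_mul_le_of_abs_le {a b M : ℝ} (hab : a ≤ b) {g h : ℝ → ℝ}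
    (hg : IntervalIntegrable g volume a b) (hbound : ∀ x ∈ Icc a b, |h x| ≤ M) :
    |∫ x in a..b, g x * h x| ≤ (∫ x in a..b, |g x|) * M := by
  rw [← Real.norm_eq_abs, ← intervalIntegral.integral_mul_const]
  refine norm_integral_le_of_norm_le hab (ae_of_all _ fun x hx ↦ ?_) (hg.abs.mul_const M)
  rw [Real.norm_eq_abs, abs_mul]
  exact mul_le_mul_of_nonneg_left (hbound x (Ioc_subset_Icc_self hx)) (abs_nonneg _)

theorem ion_quasiconvex (a b : ℝ) (hab : a < b) (f f' : ℝ → ℝ)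
    (hcont : ContinuousOn f (Set.Icc a b))
    (hf : ∀ x ∈ Set.Ioo a b, HasDerivAt f (f' x) x)
    (hint : IntervalIntegrable f' volume a b)
    (hquasi : ∀ x ∈ Set.Icc a b, ∀ y ∈ Set.Icc a b, ∀ t ∈ Set.Icc (0:ℝ) 1,
      |f' (t * x + (1 - t) * y)| ≤ max (|f' x|) (|f' y|)) :
    |(f a + f b) / 2 - (1 / (b - a)) * ∫ x in a..b, f x| ≤
      ((b - a) / 4) * max (|f' a|) (|f' b|) := by
  have hbound : ∀ x ∈ Icc a b, |f' x| ≤ max (|f' a|) (|f' b|) := by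
    intro x hx
    obtain ⟨t, ht, rfl⟩ := exists_mem_Icc_combination_eq hab.le hx
    exact hquasi a (left_mem_Icc.2 hab.le) b (right_mem_Icc.2 hab.le) t ht
  have hba : 0 < b - a := sub_pos.2 hab
  have hkernel : IntervalIntegrable (fun x ↦ x - (a + b) / 2) volume a b :=
    (continuous_id.sub continuous_const).intervalIntegrable a b
  calc |(f a + f b) / 2 - (1 / (b - a)) * ∫ x in a..b, f x|
      = |1 / (b - a) * ∫ x in a..b, (x - (a + b) / 2) * f' x| := by
        rw [integral_sub_midpoint_mul_deriv hab.le hcont hf hint]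
        field_simp
    _ = 1 / (b - a) * |∫ x in a..b, (x - (a + b) / 2) * f' x| := by
        rw [abs_mul, abs_of_pos (one_div_pos.2 hba)]
    _ ≤ 1 / (b - a) * ((b - a) ^ 2 / 4 * max (|f' a|) (|f' b|)) := by
        gcongr
        rw [← integral_abs_sub_midpoint hab.le]
        exact abs_integral_mul_le_of_abs_le hab.le hkernel hbound
    _ = (b - a) / 4 * max (|f' a|) (|f' b|) := by
        field_simp
end

section
/- Let c > 0, f differentiable on an open interval containing [a, a+c] with integrable derivative, and suppose A, B ≥ 0 satisfy |f'(a+tc)| ≤ (1-t)·A + t·B for all t ∈ [0,1]. Then |(1/c) ∫_a^{a+c} f(x) dx − f(a + c/2)| ≤ (c/8)·(A + B). -/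
/-!
After the affine substitution `x = a + t c` it suffices to treat `[0, 1]`. Integrating by parts
against the Peano kernel of the midpoint rule, `t` on `[0, 1/2]` and `t - 1` on `[1/2, 1]`, gives
`φ (1/2) - ∫₀¹ φ = ∫₀^{1/2} t φ' + ∫_{1/2}^1 (t - 1) φ'`. Bounding `|φ'|` by the linear function
`(1 - t) A + t B` and integrating against `|kernel|` yields `(A/12 + B/24) + (A/24 + B/12) = (A + B)/8`.
-/

open MeasureTheory intervalIntegral Set

theorem integral_sub_mul_deriv_eq {f f' : ℝ → ℝ} {a b : ℝ} (c : ℝ)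
    (hf : ∀ x ∈ uIcc a b, HasDerivAt f (f' x) x) (hf' : IntervalIntegrable f' volume a b) :
    ∫ x in a..b, (x - c) * f' x = (b - c) * f b - (a - c) * f a - ∫ x in a..b, f x := by
  simpa only [one_mul] using integral_mul_deriv_eq_deriv_mul
    (fun x _ ↦ (hasDerivAt_id' x).sub_const c) hf intervalIntegrable_const hf'

theorem integral_eq_mul_sub_integral_peano_kernel {f f' : ℝ → ℝ} {a m b : ℝ}
    (ham : a ≤ m) (hmb : m ≤ b) (hf : ∀ x ∈ Icc a b, HasDerivAt f (f' x) x)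
    (hf' : IntervalIntegrable f' volume a b) :
    ∫ x in a..b, f x =
      (b - a) * f m - (∫ x in a..m, (x - a) * f' x) - ∫ x in m..b, (x - b) * f' x := by
  have hab : uIcc a b = Icc a b := uIcc_of_le (ham.trans hmb)
  have hsub₁ : uIcc a m ⊆ uIcc a b := uIcc_subset_uIcc_left (hab ▸ ⟨ham, hmb⟩)
  have hsub₂ : uIcc m b ⊆ uIcc a b := uIcc_subset_uIcc_right (hab ▸ ⟨ham, hmb⟩)
  have hfi : IntervalIntegrable f volume a b := ContinuousOn.intervalIntegrable
    fun x hx ↦ (hf x (hab ▸ hx)).continuousAt.continuousWithinAt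
  rw [integral_sub_mul_deriv_eq a (fun x hx ↦ hf x (hab ▸ hsub₁ hx)) (hf'.mono_set hsub₁),
    integral_sub_mul_deriv_eq b (fun x hx ↦ hf x (hab ▸ hsub₂ hx)) (hf'.mono_set hsub₂),
    ← integral_add_adjacent_intervals (hfi.mono_set hsub₁) (hfi.mono_set hsub₂)]
  ring

theorem integral_zero_half_mul_linear (A B : ℝ) :
    ∫ t in (0 : ℝ)..1 / 2, t * ((1 - t) * A + t * B) = A / 12 + B / 24 := by
  have hpoly : (fun t : ℝ ↦ t * ((1 - t) * A + t * B)) = fun t ↦ A * t ^ 1 + (B - A) * t ^ 2 := by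
    ext t; ring
  rw [hpoly, intervalIntegral.integral_add (by apply Continuous.intervalIntegrable; fun_prop)
    (by apply Continuous.intervalIntegrable; fun_prop)]
  simp only [intervalIntegral.integral_const_mul, integral_pow]
  ring

theorem integral_half_one_one_sub_mul_linear (A B : ℝ) :
    ∫ t in (1 / 2 : ℝ)..1, (1 - t) * ((1 - t) * A + t * B) = A / 24 + B / 12 := by
  have hsymm := integral_comp_sub_left (fun s : ℝ ↦ s * ((1 - s) * B + s * A)) 1
    (a := 1 / 2) (b := 1)
  norm_num only [sub_sub_cancel] at hsymm
  rw [add_comm (A / 24), ← integral_zero_half_mul_linear B A, ← hsymm]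
  congr 1 with t
  ring

theorem abs_integral_sub_half_le {φ φ' : ℝ → ℝ} {A B : ℝ}
    (hφ : ∀ t ∈ Icc (0 : ℝ) 1, HasDerivAt φ (φ' t) t) (hφ' : IntervalIntegrable φ' volume 0 1)
    (hbound : ∀ t ∈ Icc (0 : ℝ) 1, |φ' t| ≤ (1 - t) * A + t * B) :
    |(∫ t in (0 : ℝ)..1, φ t) - φ (1 / 2)| ≤ (A + B) / 8 := by
  have hleft : |∫ t in (0 : ℝ)..1 / 2, t * φ' t| ≤ A / 12 + B / 24 := by
    rw [← integral_zero_half_mul_linear, ← Real.norm_eq_abs]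
    refine norm_integral_le_of_norm_le (by norm_num) (ae_of_all _ fun t ht ↦ ?_)
      (Continuous.intervalIntegrable (by fun_prop) _ _)
    rw [Real.norm_eq_abs, abs_mul, abs_of_pos ht.1]
    exact mul_le_mul_of_nonneg_left (hbound t ⟨ht.1.le, by linarith [ht.2]⟩) ht.1.le
  have hright : |∫ t in (1 / 2 : ℝ)..1, (t - 1) * φ' t| ≤ A / 24 + B / 12 := by
    rw [← integral_half_one_one_sub_mul_linear, ← Real.norm_eq_abs]
    refine norm_integral_le_of_norm_le (by norm_num) (ae_of_all _ fun t ht ↦ ?_)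
      (Continuous.intervalIntegrable (by fun_prop) _ _)
    rw [Real.norm_eq_abs, abs_mul, abs_of_nonpos (sub_nonpos.2 ht.2), neg_sub]
    exact mul_le_mul_of_nonneg_left (hbound t ⟨by linarith [ht.1], ht.2⟩) (sub_nonneg.2 ht.2)
  rw [integral_eq_mul_sub_integral_peano_kernel (m := 1 / 2) (by norm_num) (by norm_num) hφ hφ']
  calc |(1 - 0) * φ (1 / 2) - (∫ t in (0 : ℝ)..1 / 2, (t - 0) * φ' t)
        - (∫ t in (1 / 2 : ℝ)..1, (t - 1) * φ' t) - φ (1 / 2)|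
      = |(∫ t in (0 : ℝ)..1 / 2, t * φ' t) + ∫ t in (1 / 2 : ℝ)..1, (t - 1) * φ' t| := by
        rw [← abs_neg]
        congr 1
        simp only [sub_zero]
        ring
    _ ≤ (A / 12 + B / 24) + (A / 24 + B / 12) := (abs_add_le _ _).trans (add_le_add hleft hright)
    _ = (A + B) / 8 := by ring

theorem phi_convex_midpoint_general (a c A B : ℝ) (hc : 0 < c)
    (f f' : ℝ → ℝ)
    (hf : ∀ x ∈ Set.Icc a (a + c), HasDerivAt f (f' x) x)
    (hint : IntervalIntegrable f' volume a (a + c))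
    (hbound : ∀ t ∈ Set.Icc (0:ℝ) 1, |f' (a + t * c)| ≤ (1 - t) * A + t * B) :
    |(1 / c) * (∫ x in a..(a + c), f x) - f (a + c / 2)| ≤ (c / 8) * (A + B) := by
  have hφ : ∀ t ∈ Icc (0 : ℝ) 1, HasDerivAt (fun t ↦ f (a + t * c)) (c * f' (a + t * c)) t := by
    intro t ht
    have hx : a + t * c ∈ Icc a (a + c) := ⟨by nlinarith [ht.1], by nlinarith [ht.2]⟩
    rw [mul_comm]
    exact (hf _ hx).comp t ((hasDerivAt_mul_const c).const_add a)
  have hφ' : IntervalIntegrable (fun t ↦ c * f' (a + t * c)) volume 0 1 := by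
    simpa [hc.ne'] using ((hint.comp_add_left a).comp_mul_right (c := c)).const_mul c
  have hφbound : ∀ t ∈ Icc (0 : ℝ) 1, |c * f' (a + t * c)| ≤ (1 - t) * (c * A) + t * (c * B) := by
    intro t ht
    rw [abs_mul, abs_of_pos hc]
    nlinarith [hbound t ht]
  have hrescale : ∫ t in (0 : ℝ)..1, f (a + t * c) = (1 / c) * ∫ x in a..(a + c), f x := by
    simp [intervalIntegral.integral_comp_mul_right (fun x ↦ f (a + x)) hc.ne']
  have hmid : a + 1 / 2 * c = a + c / 2 := by ring
  have key := abs_integral_sub_half_le hφ hφ' hφbound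
  rw [hrescale, hmid] at key
  exact key.trans_eq (by ring)

theorem phi_convex_midpoint (a c A B : ℝ) (hc : 0 < c) (hA : 0 ≤ A) (hB : 0 ≤ B)
    (f f' : ℝ → ℝ)
    (hf : ∀ x ∈ Set.Icc a (a + c), HasDerivAt f (f' x) x)
    (hint : IntervalIntegrable f' volume a (a + c))
    (hbound : ∀ t ∈ Set.Icc (0:ℝ) 1, |f' (a + t * c)| ≤ (1 - t) * A + t * B) :
    |(1 / c) * (∫ x in a..(a + c), f x) - f (a + c / 2)| ≤ (c / 8) * (A + B) :=
  phi_convex_midpoint_general a c A B hc f f' hf hint hbound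
end

section
/- Let c > 0, f differentiable on an open interval containing [a, a+c] with integrable derivative, and suppose M ≥ 0 satisfies |f'(a+tc)| ≤ M for all t ∈ [0,1]. Then |(1/c) ∫_a^{a+c} f(x) dx − f(a + c/2)| ≤ (c/4)·M. -/
open MeasureTheory intervalIntegral

/-! By the mean value inequality `f` is `M`-Lipschitz on `[a, a + c]`, so `|f x - f m| ≤ M |x - m|`
for the midpoint `m`. Integrating, `∫ₐ^{a+c} f` differs from `c f(m)` by at most
`M ∫ₐ^{a+c} |x - m| dx = M c² / 4`. -/

theorem integral_abs_of_nonpos_of_nonneg {u v : ℝ} (hu : u ≤ 0) (hv : 0 ≤ v) :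
    ∫ x in u..v, |x| = (u ^ 2 + v ^ 2) / 2 := by
  have hneg : ∫ x in u..0, |x| = ∫ x in u..0, -x := by
    refine integral_congr fun x hx => abs_of_nonpos ?_
    rw [Set.uIcc_of_le hu] at hx
    exact hx.2
  have hpos : ∫ x in (0 : ℝ)..v, |x| = ∫ x in (0 : ℝ)..v, x := by
    refine integral_congr fun x hx => abs_of_nonneg ?_
    rw [Set.uIcc_of_le hv] at hx
    exact hx.1
  rw [← integral_add_adjacent_intervals (continuous_abs.intervalIntegrable u 0)
    (continuous_abs.intervalIntegrable 0 v), hneg, hpos, intervalIntegral.integral_neg, integral_id, integral_id]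
  ring

theorem integral_abs_sub_of_mem_Icc {a b m : ℝ} (hm : m ∈ Set.Icc a b) :
    ∫ x in a..b, |x - m| = ((m - a) ^ 2 + (b - m) ^ 2) / 2 := by
  rw [integral_comp_sub_right (fun x => |x|) m,
    integral_abs_of_nonpos_of_nonneg (by linarith [hm.1]) (by linarith [hm.2])]
  ring

theorem abs_integral_sub_mul_le_of_abs_sub_le {f : ℝ → ℝ} {a b m M : ℝ} (hm : m ∈ Set.Icc a b)
    (hf : IntervalIntegrable f volume a b) (hgrowth : ∀ x ∈ Set.Icc a b, |f x - f m| ≤ M * |x - m|) :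
    |(∫ x in a..b, f x) - (b - a) * f m| ≤ M * (((m - a) ^ 2 + (b - m) ^ 2) / 2) := by
  have hab : a ≤ b := hm.1.trans hm.2
  have hsub : (∫ x in a..b, f x) - (b - a) * f m = ∫ x in a..b, (f x - f m) := by
    rw [integral_sub hf intervalIntegrable_const, intervalIntegral.integral_const, smul_eq_mul]
  calc |(∫ x in a..b, f x) - (b - a) * f m|
      = ‖∫ x in a..b, (f x - f m)‖ := by rw [hsub, Real.norm_eq_abs]
    _ ≤ ∫ x in a..b, M * |x - m| :=
        intervalIntegral.norm_integral_le_of_norm_le hab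
          (ae_of_all _ fun x hx => hgrowth x (Set.Ioc_subset_Icc_self hx))
          ((by fun_prop : Continuous fun x => M * |x - m|).intervalIntegrable _ _)
    _ = M * (((m - a) ^ 2 + (b - m) ^ 2) / 2) := by
        rw [intervalIntegral.integral_const_mul, integral_abs_sub_of_mem_Icc hm]

theorem quasi_phi_convex_midpoint_general (a c M : ℝ) (hc : 0 < c)
    (f f' : ℝ → ℝ)
    (hf : ∀ x ∈ Set.Icc a (a + c), HasDerivAt f (f' x) x)
    (hbound : ∀ t ∈ Set.Icc (0:ℝ) 1, |f' (a + t * c)| ≤ M) :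
    |(1 / c) * (∫ x in a..(a + c), f x) - f (a + c / 2)| ≤ (c / 4) * M := by
  set I := Set.Icc a (a + c)
  have hmid : a + c / 2 ∈ I := ⟨by linarith, by linarith⟩
  have hf'_le : ∀ y ∈ I, ‖f' y‖ ≤ M := by
    intro y hy
    have ht : (y - a) / c ∈ Set.Icc (0 : ℝ) 1 :=
      ⟨div_nonneg (by linarith [hy.1]) hc.le, (div_le_one hc).2 (by linarith [hy.2])⟩
    simpa [div_mul_cancel₀ _ hc.ne'] using hbound _ ht
  have hgrowth : ∀ x ∈ I, |f x - f (a + c / 2)| ≤ M * |x - (a + c / 2)| := fun x hx =>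
    (convex_Icc a (a + c)).norm_image_sub_le_of_norm_hasDerivWithin_le
      (fun y hy => (hf y hy).hasDerivWithinAt) hf'_le hmid hx
  have hfint : IntervalIntegrable f volume a (a + c) :=
    ContinuousOn.intervalIntegrable_of_Icc (by linarith)
      fun x hx => (hf x hx).continuousAt.continuousWithinAt
  have key := abs_integral_sub_mul_le_of_abs_sub_le hmid hfint hgrowth
  have hrw : (1 / c) * (∫ x in a..(a + c), f x) - f (a + c / 2) =
      (1 / c) * ((∫ x in a..(a + c), f x) - (a + c - a) * f (a + c / 2)) := by
    field_simp
    ring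
  rw [hrw, abs_mul, abs_of_pos (one_div_pos.2 hc)]
  calc (1 / c) * |(∫ x in a..(a + c), f x) - (a + c - a) * f (a + c / 2)|
      ≤ (1 / c) * (M * (((a + c / 2 - a) ^ 2 + (a + c - (a + c / 2)) ^ 2) / 2)) := by gcongr
    _ = (c / 4) * M := by field_simp; ring

theorem quasi_phi_convex_midpoint (a c M : ℝ) (hc : 0 < c) (hM : 0 ≤ M)
    (f f' : ℝ → ℝ)
    (hf : ∀ x ∈ Set.Icc a (a + c), HasDerivAt f (f' x) x)
    (hint : IntervalIntegrable f' volume a (a + c))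
    (hbound : ∀ t ∈ Set.Icc (0:ℝ) 1, |f' (a + t * c)| ≤ M) :
    |(1 / c) * (∫ x in a..(a + c), f x) - f (a + c / 2)| ≤ (c / 4) * M :=
  quasi_phi_convex_midpoint_general a c M hc f f' hf hbound
end
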